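/- Let Γ be a balanced connected signed graph on n vertices with incidence matrix N and Laplacian L = N Nᵀ. Then det(L) = 0 and the sum of squares of all (n−1)×(n−1) minors of N equals n·τ(Γ), where τ(Γ) is the number of spanning trees of the underlying graph. -/

import Mathlib

open Matrix BigOperators

/-- A signed graph together with an enumeration of its edges. -/
structure SignedIncidence (n m : ℕ) where
  G : SimpleGraph (Fin n)
  sigma : Fin n → Fin n → ℤ
  sigma_symm : ∀ i j, sigma i j = sigma j i
  sigma_sign : ∀ i j, G.Adj i j → sigma i j = 1 ∨ sigma i j = -1
  ends : Fin m → Fin n × Fin n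
  ends_adj : ∀ ℓ, G.Adj (ends ℓ).1 (ends ℓ).2
  ends_inj : Function.Injective fun ℓ => Sym2.mk.uncurry (ends ℓ)
  ends_surj : ∀ e ∈ G.edgeSet, ∃ ℓ, Sym2.mk.uncurry (ends ℓ) = e

namespace SignedIncidence

variable {n m : ℕ}

def edge (S : SignedIncidence n m) (ℓ : Fin m) : Sym2 (Fin n) := Sym2.mk.uncurry (S.ends ℓ)

/-- `N` is an incidence matrix of the signed graph `S`. -/
def IsIncidence (S : SignedIncidence n m) (N : Matrix (Fin n) (Fin m) ℝ) : Prop :=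
  ∀ ℓ : Fin m,
    N (S.ends ℓ).1 ℓ * N (S.ends ℓ).2 ℓ = -((S.sigma (S.ends ℓ).1 (S.ends ℓ).2 : ℤ) : ℝ) ∧
    (N (S.ends ℓ).1 ℓ = 1 ∨ N (S.ends ℓ).1 ℓ = -1) ∧
    (N (S.ends ℓ).2 ℓ = 1 ∨ N (S.ends ℓ).2 ℓ = -1) ∧
    ∀ k, k ≠ (S.ends ℓ).1 → k ≠ (S.ends ℓ).2 → N k ℓ = 0

/-- The sign of a walk (in the graph or any subgraph): product of edge signs. -/
def walkSign (S : SignedIncidence n m) {G' : SimpleGraph (Fin n)} {i j : Fin n}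
    (w : G'.Walk i j) : ℤ :=
  (w.darts.map fun d => S.sigma d.toProd.1 d.toProd.2).prod

/-- A signed graph is balanced if every closed walk has sign `+1`. -/
def Balanced (S : SignedIncidence n m) : Prop :=
  ∀ (i : Fin n) (w : S.G.Walk i i), S.walkSign w = 1

end SignedIncidence

/-!
Balance makes the signing a switching of the all-positive one: with `θ v` the sign of any walk
from a fixed root to `v`, every edge has sign `θ i * θ j`. Hence `M = diag θ * N` is an oriented
incidence matrix of the underlying graph. Its columns sum to zero, so `θᵀ N = 0` and `N * Nᵀ` is
singular, and the minors of `N` and `M` agree up to sign. `M` is totally unimodular, and after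
deleting any row, `k` columns give a nonsingular minor iff their edges connect the `k + 1`
vertices, i.e. form a spanning tree. So each of the `k + 1` deleted rows contributes `τ(Γ)`.
-/

namespace Matrix

variable {α β γ δ R : Type*}

/-- The columns that deleting rows can leave of a directed-graph incidence matrix. -/
def IsOrientedIncidenceLike [Ring R] (A : Matrix α β R) : Prop :=
  ∀ q, (∀ p, A p q = 0) ∨
    (∃ a, (A a q = 1 ∨ A a q = -1) ∧ ∀ p, p ≠ a → A p q = 0) ∨
    (∃ a b, a ≠ b ∧ A a q = 1 ∧ A b q = -1 ∧ ∀ p, p ≠ a → p ≠ b → A p q = 0)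

theorem IsOrientedIncidenceLike.submatrix [Ring R] {A : Matrix α β R}
    (hA : A.IsOrientedIncidenceLike) {u : γ → α} (hu : u.Injective) (g : δ → β) :
    (A.submatrix u g).IsOrientedIncidenceLike := by
  intro q
  rcases hA (g q) with h0 | ⟨a, ha, h0⟩ | ⟨a, b, hab, ha, hb, h0⟩
  · exact .inl fun p => h0 _
  · by_cases hma : ∃ p, u p = a
    · obtain ⟨pa, rfl⟩ := hma
      exact .inr <| .inl ⟨pa, ha, fun p hp => h0 _ (hu.ne hp)⟩
    · exact .inl fun p => h0 _ fun h => hma ⟨p, h⟩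
  · by_cases hma : ∃ p, u p = a <;> by_cases hmb : ∃ p, u p = b
    · obtain ⟨pa, rfl⟩ := hma
      obtain ⟨pb, rfl⟩ := hmb
      exact .inr <| .inr ⟨pa, pb, fun h => hab (congrArg u h), ha, hb,
        fun p hpa hpb => h0 _ (hu.ne hpa) (hu.ne hpb)⟩
    · obtain ⟨pa, rfl⟩ := hma
      exact .inr <| .inl ⟨pa, .inl ha, fun p hp => h0 _ (hu.ne hp) fun h => hmb ⟨p, h⟩⟩
    · obtain ⟨pb, rfl⟩ := hmb
      exact .inr <| .inl ⟨pb, .inr hb, fun p hp => h0 _ (fun h => hma ⟨p, h⟩) (hu.ne hp)⟩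
    · exact .inl fun p => h0 _ (fun h => hma ⟨p, h⟩) fun h => hmb ⟨p, h⟩

theorem IsOrientedIncidenceLike.det_mem_range_signType_cast [CommRing R] [IsDomain R] {r : ℕ}
    {A : Matrix (Fin r) (Fin r) R} (hA : A.IsOrientedIncidenceLike) :
    A.det ∈ Set.range SignType.cast := by
  induction r with
  | zero => exact ⟨1, by simp⟩
  | succ r ih =>
    by_cases hzero : ∃ q, ∀ p, A p q = 0
    · obtain ⟨q, hq⟩ := hzero
      exact ⟨0, by simp [det_eq_zero_of_column_eq_zero q hq]⟩
    by_cases hunit : ∃ q a, (A a q = 1 ∨ A a q = -1) ∧ ∀ p, p ≠ a → A p q = 0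
    · obtain ⟨q, a, ha, h0⟩ := hunit
      have hlaplace : A.det =
          (-1) ^ (a + q : ℕ) * A a q * (A.submatrix a.succAbove q.succAbove).det := by
        rw [det_succ_column A q, Finset.sum_eq_single a (fun p _ hp => by simp [h0 p hp])
          (by simp)]
      obtain ⟨s, hs⟩ := ih (hA.submatrix (Fin.succAbove_right_injective (p := a)) q.succAbove)
      obtain ⟨t, ht⟩ : A a q ∈ Set.range SignType.cast :=
        ha.elim (fun h => ⟨1, by simp [h]⟩) fun h => ⟨-1, by simp [h]⟩
      exact ⟨(-1) ^ (a + q : ℕ) * t * s, by simp [hlaplace, hs, ht]⟩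
    -- every column now has one `1` and one `-1`, so the rows sum to zero
    have hrows : (1 : Fin (r + 1) → R) ᵥ* A = 0 := by
      ext q
      rcases hA q with h | h | ⟨a, b, hab, ha, hb, h0⟩
      · exact absurd ⟨q, h⟩ hzero
      · exact absurd ⟨q, h⟩ hunit
      · simp only [vecMul, dotProduct, Pi.one_apply, one_mul, Pi.zero_apply]
        rw [Finset.sum_eq_add a b hab (fun p _ hp => h0 p hp.1 hp.2) (by simp) (by simp), ha, hb,
          add_neg_cancel]
    exact ⟨0, (exists_vecMul_eq_zero_iff.mp ⟨1, one_ne_zero, hrows⟩).symm⟩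

theorem IsOrientedIncidenceLike.isTotallyUnimodular [CommRing R] [IsDomain R]
    {A : Matrix α β R} (hA : A.IsOrientedIncidenceLike) : A.IsTotallyUnimodular :=
  fun _ _ _ hf _ => (hA.submatrix hf _).det_mem_range_signType_cast

theorem vecMul_submatrix_succAbove [CommRing R] [Fintype β] {k : ℕ} (M : Matrix (Fin (k + 1)) β R)
    (i : Fin (k + 1)) (f : γ → β) (y : Fin k → R) :
    y ᵥ* M.submatrix i.succAbove f = (Fin.insertNth i 0 y ᵥ* M) ∘ f := by
  ext j
  simp [vecMul, dotProduct, Fin.sum_univ_succAbove _ i]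

theorem det_sq_submatrix_diagonal_mul [CommRing R] [Fintype α] [DecidableEq α] {k : ℕ}
    {d : α → R} (hd : ∀ a, d a ^ 2 = 1) (A : Matrix α β R) (r : Fin k → α) (c : Fin k → β) :
    ((diagonal d * A).submatrix r c).det ^ 2 = (A.submatrix r c).det ^ 2 := by
  have : (diagonal d * A).submatrix r c = diagonal (d ∘ r) * A.submatrix r c := by
    ext p q
    simp
  rw [this, det_mul, det_diagonal, mul_pow, ← Finset.prod_pow]
  simp [hd]

end Matrix

theorem SimpleGraph.connected_iff_forall_eq_zero_of_adj {V α : Type*} {G : SimpleGraph V}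
    [Zero α] [One α] [NeZero (1 : α)] (i : V) :
    G.Connected ↔ ∀ x : V → α, x i = 0 → (∀ u v, G.Adj u v → x u = x v) → x = 0 := by
  classical
  constructor
  · intro hG x hi hx
    have hwalk : ∀ {u v} (_ : G.Walk u v), x u = x v := by
      intro u v w
      induction w with
      | nil => rfl
      | cons h _ ih => exact (hx _ _ h).trans ih
    funext v
    exact (hwalk (hG.preconnected v i).some).trans hi
  · intro h
    have hreach : ∀ v, G.Reachable i v := by
      intro v
      by_contra hv
      have hx := h (fun w => if G.Reachable i w then 0 else 1) (by simp) fun u w huw => by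
        by_cases hu : G.Reachable i u
        · simp [hu, hu.trans huw.reachable]
        · have hw : ¬G.Reachable i w := fun h => hu (h.trans huw.symm.reachable)
          simp [hu, hw]
      simpa [hv] using congrFun hx v
    have : Nonempty V := ⟨i⟩
    exact ⟨fun u v => (hreach u).symm.trans (hreach v)⟩

namespace SignedIncidence

open SimpleGraph

variable {n m : ℕ} (S : SignedIncidence n m)

theorem edge_eq (ℓ : Fin m) : S.edge ℓ = s((S.ends ℓ).1, (S.ends ℓ).2) := rfl

theorem ends_ne (ℓ : Fin m) : (S.ends ℓ).1 ≠ (S.ends ℓ).2 := (S.ends_adj ℓ).ne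

theorem edge_injective : Function.Injective S.edge := S.ends_inj

theorem walkSign_nil {G' : SimpleGraph (Fin n)} {i : Fin n} :
    S.walkSign (.nil : G'.Walk i i) = 1 := rfl

theorem walkSign_cons {G' : SimpleGraph (Fin n)} {i j l : Fin n} (h : G'.Adj i j)
    (w : G'.Walk j l) : S.walkSign (.cons h w) = S.sigma i j * S.walkSign w := by
  simp [walkSign]

theorem walkSign_append {G' : SimpleGraph (Fin n)} {i j l : Fin n} (w : G'.Walk i j)
    (w' : G'.Walk j l) : S.walkSign (w.append w') = S.walkSign w * S.walkSign w' := by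
  simp [walkSign, Walk.darts_append]

theorem walkSign_reverse {G' : SimpleGraph (Fin n)} {i j : Fin n} (w : G'.Walk i j) :
    S.walkSign w.reverse = S.walkSign w := by
  simp only [walkSign, Walk.darts_reverse, List.map_reverse, List.prod_reverse, List.map_map]
  exact congrArg List.prod (List.map_congr_left fun d _ => S.sigma_symm _ _)

variable {S}

theorem walkSign_eq_one_or_neg_one {i j : Fin n} (w : S.G.Walk i j) :
    S.walkSign w = 1 ∨ S.walkSign w = -1 := by
  induction w with
  | nil => exact .inl rfl
  | cons h w ih =>
    rw [walkSign_cons]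
    rcases S.sigma_sign _ _ h with h1 | h1 <;> rcases ih with h2 | h2 <;> simp [h1, h2]

theorem Balanced.walkSign_eq (hbal : S.Balanced) {i j : Fin n} (w w' : S.G.Walk i j) :
    S.walkSign w = S.walkSign w' := by
  have h := hbal i (w.append w'.reverse)
  rw [walkSign_append, walkSign_reverse] at h
  rcases walkSign_eq_one_or_neg_one w with h1 | h1 <;>
    rcases walkSign_eq_one_or_neg_one w' with h2 | h2 <;> simp_all

/-- Harary's switching: `θ v` is the sign of any walk from a fixed root to `v`. -/
theorem Balanced.exists_switching (hbal : S.Balanced) (hconn : S.G.Connected) :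
    ∃ θ : Fin n → ℤ, (∀ v, θ v = 1 ∨ θ v = -1) ∧
      ∀ i j, S.G.Adj i j → S.sigma i j = θ i * θ j := by
  obtain ⟨r⟩ := hconn.nonempty
  let path (v : Fin n) : S.G.Walk r v := (hconn.preconnected r v).some
  refine ⟨fun v => S.walkSign (path v), fun v => walkSign_eq_one_or_neg_one _, fun i j hij => ?_⟩
  have h := hbal.walkSign_eq (path j) ((path i).append (.cons hij .nil))
  rw [walkSign_append, walkSign_cons, walkSign_nil, mul_one] at h
  change S.sigma i j = S.walkSign (path i) * S.walkSign (path j)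
  rcases walkSign_eq_one_or_neg_one (path i) with h1 | h1 <;> simp [h, h1]

variable (S)

def IsOrientedIncidence (M : Matrix (Fin n) (Fin m) ℝ) : Prop :=
  ∀ ℓ, (M (S.ends ℓ).1 ℓ = 1 ∨ M (S.ends ℓ).1 ℓ = -1) ∧
    M (S.ends ℓ).2 ℓ = -M (S.ends ℓ).1 ℓ ∧
    ∀ v, v ≠ (S.ends ℓ).1 → v ≠ (S.ends ℓ).2 → M v ℓ = 0

variable {S}

theorem IsIncidence.isOrientedIncidence_diagonal_mul {N : Matrix (Fin n) (Fin m) ℝ}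
    (hN : S.IsIncidence N) {θ : Fin n → ℤ} (hθ : ∀ v, θ v = 1 ∨ θ v = -1)
    (hσ : ∀ i j, S.G.Adj i j → S.sigma i j = θ i * θ j) :
    S.IsOrientedIncidence (diagonal (fun v => (θ v : ℝ)) * N) := by
  intro ℓ
  obtain ⟨hprod, ha, -, h0⟩ := hN ℓ
  set a := (S.ends ℓ).1
  set b := (S.ends ℓ).2
  have hθb : (θ b : ℝ) ^ 2 = 1 := by rcases hθ b with h | h <;> simp [h]
  have hNa : N a ℓ ^ 2 = 1 := by rcases ha with h | h <;> simp [h]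
  rw [hσ a b (S.ends_adj ℓ), Int.cast_mul] at hprod
  simp only [diagonal_mul]
  refine ⟨?_, ?_, fun v hva hvb => by simp [h0 v hva hvb]⟩
  · rcases hθ a with h | h <;> rcases ha with h' | h' <;> simp [h, h']
  · -- from `N a * N b = -θ a * θ b` and `θ b ^ 2 = N a ^ 2 = 1`
    linear_combination (θ b : ℝ) * N a ℓ * hprod - (θ b : ℝ) * N b ℓ * hNa
      - (θ a : ℝ) * N a ℓ * hθb

theorem IsOrientedIncidence.vecMul_apply {M : Matrix (Fin n) (Fin m) ℝ}
    (hM : S.IsOrientedIncidence M) (x : Fin n → ℝ) (ℓ : Fin m) :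
    (x ᵥ* M) ℓ = M (S.ends ℓ).1 ℓ * (x (S.ends ℓ).1 - x (S.ends ℓ).2) := by
  obtain ⟨-, hb, h0⟩ := hM ℓ
  simp only [vecMul, dotProduct]
  rw [Finset.sum_eq_add _ _ (S.ends_ne ℓ) (fun v _ hv => by simp [h0 v hv.1 hv.2]) (by simp)
    (by simp), hb]
  ring

theorem IsOrientedIncidence.isOrientedIncidenceLike {M : Matrix (Fin n) (Fin m) ℝ}
    (hM : S.IsOrientedIncidence M) : M.IsOrientedIncidenceLike := by
  intro ℓ
  obtain ⟨ha, hb, h0⟩ := hM ℓ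
  rcases ha with h | h
  · exact .inr <| .inr ⟨_, _, S.ends_ne ℓ, h, by rw [hb, h], h0⟩
  · exact .inr <| .inr ⟨_, _, (S.ends_ne ℓ).symm, by rw [hb, h, neg_neg], h,
      fun v h1 h2 => h0 v h2 h1⟩

variable (S) in
def spanningSubgraph {k : ℕ} (f : Fin k → Fin m) : SimpleGraph (Fin n) :=
  fromEdgeSet (S.edge '' Set.range f)

variable {k : ℕ}

theorem edgeSet_spanningSubgraph (f : Fin k → Fin m) :
    (S.spanningSubgraph f).edgeSet = S.edge '' Set.range f := by
  rw [spanningSubgraph, edgeSet_fromEdgeSet, sdiff_eq_left, Set.disjoint_left]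
  rintro _ ⟨ℓ, -, rfl⟩
  exact not_isDiag_of_mem_edgeSet _ (S.ends_adj ℓ)

theorem spanningSubgraph_le (f : Fin k → Fin m) : S.spanningSubgraph f ≤ S.G := by
  rw [← edgeSet_subset_edgeSet, edgeSet_spanningSubgraph]
  rintro _ ⟨ℓ, -, rfl⟩
  exact S.ends_adj ℓ

theorem card_edgeSet_spanningSubgraph {f : Fin k → Fin m} (hf : f.Injective) :
    Nat.card (S.spanningSubgraph f).edgeSet = k := by
  rw [edgeSet_spanningSubgraph, Nat.card_image_of_injective S.edge_injective,
    Nat.card_range_of_injective hf, Nat.card_fin]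

theorem forall_adj_spanningSubgraph_iff {α : Type*} {f : Fin k → Fin m} {x : Fin n → α} :
    (∀ u v, (S.spanningSubgraph f).Adj u v → x u = x v) ↔
      ∀ j, x (S.ends (f j)).1 = x (S.ends (f j)).2 := by
  simp_rw [← mem_edgeSet, edgeSet_spanningSubgraph]
  constructor
  · exact fun h j => h _ _ ⟨f j, ⟨j, rfl⟩, rfl⟩
  · rintro h u v ⟨_, ⟨j, rfl⟩, huv⟩
    rcases Sym2.eq_iff.mp ((S.edge_eq _).symm.trans huv) with ⟨rfl, rfl⟩ | ⟨rfl, rfl⟩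
    · exact h j
    · exact (h j).symm

theorem spanningSubgraph_injOn :
    Set.InjOn (S.spanningSubgraph (k := k)) {f | StrictMono f} := by
  intro f hf g hg hfg
  have := congrArg edgeSet hfg
  rw [edgeSet_spanningSubgraph, edgeSet_spanningSubgraph,
    (Set.image_injective.mpr S.edge_injective).eq_iff] at this
  exact (hf.range_inj hg).mp this

theorem exists_strictMono_spanningSubgraph_eq {H : SimpleGraph (Fin n)} (hH : H ≤ S.G)
    (hcard : Nat.card H.edgeSet = k) :
    ∃ f : Fin k → Fin m, StrictMono f ∧ S.spanningSubgraph f = H := by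
  classical
  let L := Finset.univ.filter fun ℓ => S.edge ℓ ∈ H.edgeSet
  have hL : S.edge '' L = H.edgeSet := by
    ext e
    constructor
    · rintro ⟨ℓ, hℓ, rfl⟩
      simpa [L] using hℓ
    · intro he
      obtain ⟨ℓ, hℓ : S.edge ℓ = e⟩ := S.ends_surj e (edgeSet_mono hH he)
      subst hℓ
      exact ⟨ℓ, by simpa [L] using he, rfl⟩
  have hLcard : L.card = k := by
    rw [← Nat.card_eq_finsetCard, ← hcard, ← hL, Nat.card_image_of_injective S.edge_injective]
    rfl
  refine ⟨L.orderEmbOfFin hLcard, (L.orderEmbOfFin hLcard).strictMono, ?_⟩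
  rw [spanningSubgraph, Finset.range_orderEmbOfFin, hL, fromEdgeSet_edgeSet]

end SignedIncidence

namespace SignedIncidence

open SimpleGraph

variable {k m : ℕ} {S : SignedIncidence (k + 1) m} {M : Matrix (Fin (k + 1)) (Fin m) ℝ}

theorem IsOrientedIncidence.det_submatrix_succAbove_ne_zero_iff (hM : S.IsOrientedIncidence M)
    (i : Fin (k + 1)) (f : Fin k → Fin m) :
    (M.submatrix i.succAbove f).det ≠ 0 ↔ (S.spanningSubgraph f).Connected := by
  -- a left kernel vector, extended by `0` at the deleted row `i`, is constant across chosen edges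
  have hker : ∀ y : Fin k → ℝ, y ᵥ* M.submatrix i.succAbove f = 0 ↔
      ∀ j, (Fin.insertNth i 0 y : Fin (k + 1) → ℝ) (S.ends (f j)).1 =
        (Fin.insertNth i 0 y : Fin (k + 1) → ℝ) (S.ends (f j)).2 := by
    intro y
    simp only [vecMul_submatrix_succAbove, funext_iff, Function.comp_apply, hM.vecMul_apply,
      Pi.zero_apply, mul_eq_zero, sub_eq_zero]
    exact forall_congr' fun j => or_iff_right ((hM (f j)).1.elim (by simp [·]) (by simp [·]))
  rw [connected_iff_forall_eq_zero_of_adj i (α := ℝ), Ne, ← exists_vecMul_eq_zero_iff]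
  simp_rw [forall_adj_spanningSubgraph_iff]
  constructor
  · intro h x hi hx
    have hx' : Fin.insertNth i 0 (x ∘ i.succAbove) = x := Fin.insertNth_eq_iff.mpr ⟨hi.symm, rfl⟩
    by_contra hne
    exact h ⟨x ∘ i.succAbove, fun h0 => hne (by rw [← hx', h0]; simp),
      (hker _).mpr (by rwa [hx'])⟩
  · rintro h ⟨y, hy, hy0⟩
    have := h _ (Fin.insertNth_apply_same _ _ _) ((hker y).mp hy0)
    exact hy (funext fun p => by simpa using congrFun this (i.succAbove p))

open scoped Classical in
theorem IsOrientedIncidence.det_submatrix_succAbove_sq (hM : S.IsOrientedIncidence M)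
    (i : Fin (k + 1)) {f : Fin k → Fin m} (hf : f.Injective) :
    (M.submatrix i.succAbove f).det ^ 2 = if (S.spanningSubgraph f).IsTree then 1 else 0 := by
  obtain ⟨s, hs⟩ := hM.isOrientedIncidenceLike.isTotallyUnimodular k i.succAbove f
    Fin.succAbove_right_injective hf
  have htree : (S.spanningSubgraph f).IsTree ↔ (M.submatrix i.succAbove f).det ≠ 0 := by
    rw [isTree_iff_connected_and_card, card_edgeSet_spanningSubgraph hf, Nat.card_fin,
      hM.det_submatrix_succAbove_ne_zero_iff]
    simp
  rw [← hs] at htree ⊢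
  clear hs
  cases s <;> simp_all

variable (S) in
open scoped Classical in
theorem card_filter_strictMono_isTree :
    (Finset.univ.filter fun f : Fin k → Fin m =>
        StrictMono f ∧ (S.spanningSubgraph f).IsTree).card =
      Nat.card {H : SimpleGraph (Fin (k + 1)) // H ≤ S.G ∧ H.IsTree} := by
  rw [← Fintype.card_subtype, Fintype.card_eq_nat_card]
  refine Nat.card_eq_of_bijective
    (fun f => ⟨S.spanningSubgraph f.1, S.spanningSubgraph_le f.1, f.2.2⟩) ⟨?_, ?_⟩
  · rintro ⟨f, hf, _⟩ ⟨g, hg, _⟩ hfg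
    exact Subtype.ext (spanningSubgraph_injOn hf hg (congrArg Subtype.val hfg))
  · rintro ⟨H, hH, htree⟩
    have hcard := (isTree_iff_connected_and_card.mp htree).2
    rw [Nat.card_fin, Nat.add_right_cancel_iff] at hcard
    obtain ⟨f, hf, rfl⟩ := S.exists_strictMono_spanningSubgraph_eq hH hcard
    exact ⟨⟨f, hf, htree⟩, rfl⟩

end SignedIncidence

open scoped Classical in
theorem balanced_det_L_and_vol {k m : ℕ} (S : SignedIncidence (k + 1) m)
    (hconn : S.G.Connected) (hbal : S.Balanced)
    (N : Matrix (Fin (k + 1)) (Fin m) ℝ) (hN : S.IsIncidence N) :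
    (N * Nᵀ).det = 0 ∧
    (∑ i : Fin (k + 1), ∑ f ∈ Finset.univ.filter (fun f : Fin k → Fin m => StrictMono f),
        ((N.submatrix i.succAbove f).det) ^ 2)
      = ((k + 1 : ℕ) : ℝ) *
        ((Nat.card {H : SimpleGraph (Fin (k + 1)) // H ≤ S.G ∧ H.IsTree} : ℕ) : ℝ) := by
  obtain ⟨θ, hθ, hσ⟩ := hbal.exists_switching hconn
  have hM := hN.isOrientedIncidence_diagonal_mul hθ hσ
  have hθsq : ∀ v, (θ v : ℝ) ^ 2 = 1 := fun v => by rcases hθ v with h | h <;> simp [h]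
  have hker : (fun v => (θ v : ℝ)) ᵥ* N = 0 := by
    have hθ1 : (1 : Fin (k + 1) → ℝ) ᵥ* diagonal (fun v => (θ v : ℝ)) = fun v => (θ v : ℝ) := by
      ext v
      simp [vecMul_diagonal]
    ext ℓ
    simpa [← vecMul_vecMul, hθ1] using hM.vecMul_apply 1 ℓ
  have hminor (i : Fin (k + 1)) {f : Fin k → Fin m} (hf : StrictMono f) :
      (N.submatrix i.succAbove f).det ^ 2 = if (S.spanningSubgraph f).IsTree then 1 else 0 := by
    rw [← det_sq_submatrix_diagonal_mul hθsq, hM.det_submatrix_succAbove_sq i hf.injective]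
  refine ⟨exists_vecMul_eq_zero_iff.mp ⟨_, fun h => ?_, by rw [← vecMul_vecMul, hker, zero_vecMul]⟩,
    ?_⟩
  · rcases hθ 0 with h0 | h0 <;> simpa [h0] using congrFun h 0
  · simp_rw [Finset.sum_congr rfl fun f hf => hminor _ (Finset.mem_filter.mp hf).2,
      Finset.sum_boole, Finset.filter_filter, SignedIncidence.card_filter_strictMono_isTree]
    simp
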